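/- Let d₁, d₂ be positive integers with d₁ ∣ d₂, set n := d₁·d₂, and in M = (ZMod n)⁴ let G be the subgroup generated by d₁·e₁' and d₂·e₂'. Then: (i) G is isotropic with respect to the standard symplectic form ω; (ii) G has cardinality n; (iii) G^⊥ is the subgroup generated by e₁', d₂·f₁', e₂' and d₁·f₂', and G^⊥/G is isomorphic as an abelian group to ZMod d₁ × ZMod d₁ × ZMod d₂ × ZMod d₂; (iv) if moreover d₂ is even, then every coset of G contains at most two of the six Weierstrass 2-torsion elements e₁, f₁, e₁+f₁, e₂, f₂, e₂+f₂. -/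

import Mathlib

/-- The group `A[n]` of `n`-torsion points of a principally polarized abelian surface,
modelled as `(ZMod n)⁴`, with coordinates ordered `(e₁', e₂', f₁', f₂')`. -/
abbrev M (n : ℕ) : Type := ZMod n × ZMod n × ZMod n × ZMod n

/-- The standard generator `e₁'`. -/
def e₁' (n : ℕ) : M n := (1, 0, 0, 0)
/-- The standard generator `e₂'`. -/
def e₂' (n : ℕ) : M n := (0, 1, 0, 0)
/-- The standard generator `f₁'`. -/
def f₁' (n : ℕ) : M n := (0, 0, 1, 0)
/-- The standard generator `f₂'`. -/
def f₂' (n : ℕ) : M n := (0, 0, 0, 1)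

/-- The standard symplectic form on `(ZMod n)⁴`: the biadditive alternating form with
`ω(e₁',f₁') = ω(e₂',f₂') = 1` and vanishing on the other pairs of standard generators. -/
def sympForm (n : ℕ) (x y : M n) : ZMod n :=
  x.1 * y.2.2.1 + x.2.1 * y.2.2.2 - x.2.2.1 * y.1 - x.2.2.2 * y.2.1

/-- A subgroup `G` is isotropic if the symplectic form vanishes identically on `G × G`. -/
def IsIsotropic (n : ℕ) (G : AddSubgroup (M n)) : Prop :=
  ∀ g ∈ G, ∀ h ∈ G, sympForm n g h = 0

lemma sympForm_add_left (n : ℕ) (a b g : M n) :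
    sympForm n (a + b) g = sympForm n a g + sympForm n b g := by
  simp only [sympForm, Prod.fst_add, Prod.snd_add]; ring

lemma sympForm_neg_left (n : ℕ) (a g : M n) :
    sympForm n (-a) g = -sympForm n a g := by
  simp only [sympForm, Prod.fst_neg, Prod.snd_neg]; ring

/-- The orthogonal complement `G^⊥` of a subgroup `G` with respect to the symplectic form. -/
def perp (n : ℕ) (G : AddSubgroup (M n)) : AddSubgroup (M n) where
  carrier := {x | ∀ g ∈ G, sympForm n x g = 0}
  zero_mem' := by intro g _; simp [sympForm]
  add_mem' := by
    intro a b ha hb g hg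
    rw [sympForm_add_left, ha g hg, hb g hg, add_zero]
  neg_mem' := by
    intro a ha g hg
    rw [sympForm_neg_left, ha g hg, neg_zero]

/-- The six Weierstrass 2-torsion elements `e₁, f₁, e₁+f₁, e₂, f₂, e₂+f₂`,
where `e₁ = (n/2)·e₁'`, etc. -/
def weierstrassSet (n : ℕ) : Set (M n) :=
  {(n / 2) • e₁' n, (n / 2) • f₁' n, (n / 2) • e₁' n + (n / 2) • f₁' n,
   (n / 2) • e₂' n, (n / 2) • f₂' n, (n / 2) • e₂' n + (n / 2) • f₂' n}

/-!
Everything is computed coordinatewise. `G` is `d₁ℤ/n × d₂ℤ/n × 0 × 0`, so it pairs trivially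
with itself, and pairing `x` with the generators `d₁e₁'`, `d₂e₂'` shows that `G^⊥` is
`ℤ/n × ℤ/n × d₂ℤ/n × d₁ℤ/n`. Parametrising `G^⊥` by `ℤ⁴` identifies `G^⊥/G` with
`ℤ/d₁ × ℤ/d₁ × ℤ/d₂ × ℤ/d₂`. Finally `x - y ∈ G` forces `x` and `y` to have the same
`f`-coordinates, and each value of the `f`-coordinates is taken by at most two Weierstrass points.
-/

open AddSubgroup

lemma ZMod.intCast_mem_zmultiples_natCast_iff {n d : ℕ} (hd : d ∣ n) (a : ℤ) :
    (a : ZMod n) ∈ zmultiples (d : ZMod n) ↔ (d : ℤ) ∣ a := by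
  constructor
  · rintro ⟨k, hk⟩
    have h : ((k * d - a : ℤ) : ZMod n) = 0 := by
      rw [Int.cast_sub, ← hk]; push_cast; rw [zsmul_eq_mul, sub_self]
    rw [ZMod.intCast_zmod_eq_zero_iff_dvd] at h
    simpa using dvd_sub (dvd_mul_left (d : ℤ) k) ((Int.natCast_dvd_natCast.2 hd).trans h)
  · rintro ⟨k, rfl⟩
    exact ⟨k, by push_cast; rw [zsmul_eq_mul, mul_comm]⟩

lemma ZMod.mul_natCast_eq_zero_iff_mem_zmultiples {n d e : ℕ} (h : n = d * e) (hd : d ≠ 0)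
    (u : ZMod n) : u * d = 0 ↔ u ∈ zmultiples (e : ZMod n) := by
  obtain ⟨a, rfl⟩ := ZMod.intCast_surjective u
  rw [ZMod.intCast_mem_zmultiples_natCast_iff (h ▸ dvd_mul_left e d), ← Int.cast_natCast,
    ← Int.cast_mul, ZMod.intCast_zmod_eq_zero_iff_dvd, h, Nat.cast_mul, mul_comm a,
    mul_dvd_mul_iff_left (Int.natCast_ne_zero.2 hd)]

lemma ZMod.natCard_zmultiples_natCast {n d e : ℕ} (h : n = d * e) (hn : n ≠ 0) :
    Nat.card (zmultiples (d : ZMod n)) = e := by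
  have hd : d ≠ 0 := left_ne_zero_of_mul (h ▸ hn)
  rw [Nat.card_zmultiples, ZMod.addOrderOf_coe _ hn, Nat.gcd_eq_right (h ▸ dvd_mul_right d e), h,
    Nat.mul_div_cancel_left _ (Nat.pos_of_ne_zero hd)]

lemma AddMonoidHom.nonempty_addEquiv_of_ker_eq {A B C : Type*} [AddGroup A] [AddGroup B]
    [AddGroup C] {f : A →+ B} {g : A →+ C} (hf : Function.Surjective f)
    (hg : Function.Surjective g) (h : f.ker = g.ker) : Nonempty (B ≃+ C) :=
  ⟨(QuotientAddGroup.quotientKerEquivOfSurjective f hf).symm.trans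
    ((QuotientAddGroup.quotientAddEquivOfEq h).trans
      (QuotientAddGroup.quotientKerEquivOfSurjective g hg))⟩

lemma sympForm_add_right (n : ℕ) (x a b : M n) :
    sympForm n x (a + b) = sympForm n x a + sympForm n x b := by
  simp only [sympForm, Prod.fst_add, Prod.snd_add]; ring

lemma mem_perp_closure_iff {n : ℕ} {S : Set (M n)} {x : M n} :
    x ∈ perp n (closure S) ↔ ∀ s ∈ S, sympForm n x s = 0 := by
  refine ⟨fun hx s hs => hx s (subset_closure hs), fun hS g hg => ?_⟩
  let ωx : M n →+ ZMod n := AddMonoidHom.mk' (sympForm n x) (sympForm_add_right n x)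
  exact (closure_le ωx.ker).2 hS hg

section OfType

variable (d₁ d₂ : ℕ)

def isotropicOfType : AddSubgroup (M (d₁ * d₂)) :=
  (zmultiples (d₁ : ZMod (d₁ * d₂))).prod ((zmultiples (d₂ : ZMod (d₁ * d₂))).prod ⊥)

def perpOfType : AddSubgroup (M (d₁ * d₂)) :=
  (⊤ : AddSubgroup (ZMod (d₁ * d₂))).prod ((⊤ : AddSubgroup (ZMod (d₁ * d₂))).prod
    ((zmultiples (d₂ : ZMod (d₁ * d₂))).prod (zmultiples (d₁ : ZMod (d₁ * d₂)))))

variable {d₁ d₂}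

@[simp]
lemma mem_isotropicOfType {x : M (d₁ * d₂)} :
    x ∈ isotropicOfType d₁ d₂ ↔ x.1 ∈ zmultiples (d₁ : ZMod (d₁ * d₂)) ∧
      x.2.1 ∈ zmultiples (d₂ : ZMod (d₁ * d₂)) ∧ x.2.2 = 0 := by
  simp [isotropicOfType, mem_prod]

@[simp]
lemma mem_perpOfType {x : M (d₁ * d₂)} :
    x ∈ perpOfType d₁ d₂ ↔ x.2.2.1 ∈ zmultiples (d₂ : ZMod (d₁ * d₂)) ∧
      x.2.2.2 ∈ zmultiples (d₁ : ZMod (d₁ * d₂)) := by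
  simp [perpOfType, mem_prod]

lemma snd_snd_eq_of_sub_mem_isotropicOfType {x y : M (d₁ * d₂)}
    (h : x - y ∈ isotropicOfType d₁ d₂) : x.2.2 = y.2.2 :=
  sub_eq_zero.1 (mem_isotropicOfType.1 h).2.2

lemma closure_eq_isotropicOfType :
    AddSubgroup.closure {d₁ • e₁' (d₁ * d₂), d₂ • e₂' (d₁ * d₂)} = isotropicOfType d₁ d₂ := by
  refine le_antisymm ((closure_le _).2 ?_) fun x hx => ?_
  · rintro v (rfl | rfl) <;> simp [e₁', e₂']
  · obtain ⟨⟨k, hk⟩, ⟨l, hl⟩, hf⟩ := mem_isotropicOfType.1 hx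
    have hx : x = k • d₁ • e₁' (d₁ * d₂) + l • d₂ • e₂' (d₁ * d₂) := by
      ext <;> simp [e₁', e₂', ← hk, ← hl, hf]
    rw [hx]
    exact add_mem (zsmul_mem (subset_closure (by simp)) k) (zsmul_mem (subset_closure (by simp)) l)

lemma perp_closure_eq_perpOfType (h₁ : d₁ ≠ 0) (h₂ : d₂ ≠ 0) :
    perp (d₁ * d₂) (AddSubgroup.closure {d₁ • e₁' (d₁ * d₂), d₂ • e₂' (d₁ * d₂)}) =
      perpOfType d₁ d₂ := by
  ext x
  rw [mem_perp_closure_iff, mem_perpOfType,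
    ← ZMod.mul_natCast_eq_zero_iff_mem_zmultiples rfl h₁,
    ← ZMod.mul_natCast_eq_zero_iff_mem_zmultiples (mul_comm d₁ d₂) h₂]
  simp [sympForm, e₁', e₂']

lemma isIsotropic_isotropicOfType : IsIsotropic (d₁ * d₂) (isotropicOfType d₁ d₂) := by
  intro g hg h hh
  obtain ⟨-, -, hg⟩ := mem_isotropicOfType.1 hg
  obtain ⟨-, -, hh⟩ := mem_isotropicOfType.1 hh
  simp [sympForm, Prod.ext_iff.1 hg, Prod.ext_iff.1 hh]

lemma natCard_isotropicOfType (h₁ : d₁ ≠ 0) (h₂ : d₂ ≠ 0) :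
    Nat.card (isotropicOfType d₁ d₂) = d₁ * d₂ := by
  have hn : d₁ * d₂ ≠ 0 := mul_ne_zero h₁ h₂
  rw [isotropicOfType, Nat.card_congr (prodEquiv _ _).toEquiv, Nat.card_prod,
    Nat.card_congr (prodEquiv _ _).toEquiv, Nat.card_prod, card_bot,
    ZMod.natCard_zmultiples_natCast rfl hn, ZMod.natCard_zmultiples_natCast (mul_comm d₁ d₂) hn,
    mul_one, mul_comm]

end OfType

section Quotient

variable (d₁ d₂ : ℕ)

def perpParam : (ℤ × ℤ × ℤ × ℤ) →+ M (d₁ * d₂) :=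
  (Int.castAddHom _).prodMap ((Int.castAddHom _).prodMap
    (((AddMonoidHom.mulRight (d₂ : ZMod (d₁ * d₂))).comp (Int.castAddHom _)).prodMap
      ((AddMonoidHom.mulRight (d₁ : ZMod (d₁ * d₂))).comp (Int.castAddHom _))))

variable {d₁ d₂}

@[simp]
lemma perpParam_apply (p : ℤ × ℤ × ℤ × ℤ) :
    perpParam d₁ d₂ p = ((p.1 : ZMod (d₁ * d₂)), (p.2.1 : ZMod (d₁ * d₂)),
      (p.2.2.1 : ZMod (d₁ * d₂)) * d₂, (p.2.2.2 : ZMod (d₁ * d₂)) * d₁) :=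
  rfl

lemma range_perpParam : (perpParam d₁ d₂).range = perpOfType d₁ d₂ := by
  ext x
  refine ⟨?_, fun hx => ?_⟩
  · rintro ⟨p, rfl⟩
    simp [mem_zmultiples_iff]
  · obtain ⟨⟨k, hk⟩, ⟨l, hl⟩⟩ := mem_perpOfType.1 hx
    obtain ⟨a, ha⟩ := ZMod.intCast_surjective x.1
    obtain ⟨b, hb⟩ := ZMod.intCast_surjective x.2.1
    exact ⟨(a, b, k, l), by ext <;> simp [ha, hb, ← hk, ← hl, zsmul_eq_mul]⟩

lemma closure_eq_perpOfType :
    AddSubgroup.closure {e₁' (d₁ * d₂), d₂ • f₁' (d₁ * d₂), e₂' (d₁ * d₂), d₁ • f₂' (d₁ * d₂)} =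
      perpOfType d₁ d₂ := by
  refine le_antisymm ((closure_le _).2 ?_) ?_
  · rintro v (rfl | rfl | rfl | rfl) <;> simp [e₁', e₂', f₁', f₂']
  · rw [← range_perpParam]
    rintro _ ⟨⟨a, b, k, l⟩, rfl⟩
    have h : perpParam d₁ d₂ (a, b, k, l) = a • e₁' (d₁ * d₂) + b • e₂' (d₁ * d₂) +
        k • d₂ • f₁' (d₁ * d₂) + l • d₁ • f₂' (d₁ * d₂) := by
      ext <;> simp [e₁', e₂', f₁', f₂']
    rw [h]
    refine add_mem (add_mem (add_mem ?_ ?_) ?_) ?_ <;> exact zsmul_mem (subset_closure (by simp)) _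

lemma nonempty_quotient_perpOfType_addEquiv (h₁ : d₁ ≠ 0) (h₂ : d₂ ≠ 0) :
    Nonempty ((perpOfType d₁ d₂ ⧸ (isotropicOfType d₁ d₂).addSubgroupOf (perpOfType d₁ d₂)) ≃+
      (ZMod d₁ × ZMod d₁ × ZMod d₂ × ZMod d₂)) := by
  let ρ : (ℤ × ℤ × ℤ × ℤ) →+ perpOfType d₁ d₂ :=
    (perpParam d₁ d₂).codRestrict _ fun p => range_perpParam ▸ ⟨p, rfl⟩
  have hρ : Function.Surjective ρ := by
    rintro ⟨x, hx⟩
    obtain ⟨p, rfl⟩ := range_perpParam (d₁ := d₁) (d₂ := d₂) ▸ hx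
    exact ⟨p, rfl⟩
  let σ : (ℤ × ℤ × ℤ × ℤ) →+ ZMod d₁ × ZMod d₁ × ZMod d₂ × ZMod d₂ :=
    AddMonoidHom.mk' (fun p => (p.1, p.2.2.1, p.2.1, p.2.2.2)) fun p q => by ext <;> simp
  have hσ : Function.Surjective σ := by
    rintro ⟨a, c, b, d⟩
    obtain ⟨a, rfl⟩ := ZMod.intCast_surjective a
    obtain ⟨b, rfl⟩ := ZMod.intCast_surjective b
    obtain ⟨c, rfl⟩ := ZMod.intCast_surjective c
    obtain ⟨d, rfl⟩ := ZMod.intCast_surjective d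
    exact ⟨(a, b, c, d), rfl⟩
  refine AddMonoidHom.nonempty_addEquiv_of_ker_eq (f := (QuotientAddGroup.mk' _).comp ρ)
    ((QuotientAddGroup.mk'_surjective _).comp hρ) hσ ?_
  ext ⟨a, b, c, d⟩
  simp only [AddMonoidHom.mem_ker, AddMonoidHom.comp_apply, QuotientAddGroup.mk'_apply,
    QuotientAddGroup.eq_zero_iff, mem_addSubgroupOf, ρ, AddMonoidHom.codRestrict_apply,
    perpParam_apply, mem_isotropicOfType, Prod.mk_eq_zero,
    ZMod.mul_natCast_eq_zero_iff_mem_zmultiples rfl h₁,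
    ZMod.mul_natCast_eq_zero_iff_mem_zmultiples (mul_comm d₁ d₂) h₂,
    ZMod.intCast_mem_zmultiples_natCast_iff (dvd_mul_right d₁ d₂),
    ZMod.intCast_mem_zmultiples_natCast_iff (dvd_mul_left d₂ d₁), σ, AddMonoidHom.mk'_apply,
    ZMod.intCast_zmod_eq_zero_iff_dvd]
  tauto

end Quotient

lemma add_eq_of_mem_weierstrassSet {n : ℕ} {u v : M n} (hu : u ∈ weierstrassSet n)
    (hv : v ∈ weierstrassSet n) (hf : u.2.2 = v.2.2) (huv : u ≠ v) :
    u + v = ((n / 2 : ℕ) - u.2.2.2, (n / 2 : ℕ) - u.2.2.1, u.2.2.1 + u.2.2.1,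
      u.2.2.2 + u.2.2.2) := by
  simp only [weierstrassSet, e₁', e₂', f₁', f₂', Prod.smul_mk, Prod.mk_add_mk, smul_zero,
    nsmul_eq_mul, mul_one, add_zero, zero_add, Set.mem_insert_iff, Set.mem_singleton_iff] at hu hv
  rcases hu with rfl | rfl | rfl | rfl | rfl | rfl <;>
    rcases hv with rfl | rfl | rfl | rfl | rfl | rfl <;>
    simp_all [Prod.ext_iff, eq_comm]

lemma eq_of_mem_weierstrassSet {n : ℕ} {x y z : M n} (hx : x ∈ weierstrassSet n)
    (hy : y ∈ weierstrassSet n) (hz : z ∈ weierstrassSet n) (hfy : x.2.2 = y.2.2)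
    (hfz : x.2.2 = z.2.2) (hxy : x ≠ y) (hxz : x ≠ z) : y = z :=
  add_left_cancel ((add_eq_of_mem_weierstrassSet hx hy hfy hxy).trans
    (add_eq_of_mem_weierstrassSet hx hz hfz hxz).symm)

theorem stmt_12_general (d₁ d₂ : ℕ) (hd₁ : 0 < d₁) (hd₂ : 0 < d₂)
    (G : AddSubgroup (M (d₁ * d₂)))
    (hG : G = AddSubgroup.closure {d₁ • e₁' (d₁ * d₂), d₂ • e₂' (d₁ * d₂)}) :
    IsIsotropic (d₁ * d₂) G ∧
    Nat.card G = d₁ * d₂ ∧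
    perp (d₁ * d₂) G = AddSubgroup.closure
      {e₁' (d₁ * d₂), d₂ • f₁' (d₁ * d₂), e₂' (d₁ * d₂), d₁ • f₂' (d₁ * d₂)} ∧
    Nonempty
      ((perp (d₁ * d₂) G ⧸ G.addSubgroupOf (perp (d₁ * d₂) G)) ≃+
        (ZMod d₁ × ZMod d₁ × ZMod d₂ × ZMod d₂)) ∧
    (2 ∣ d₂ →
      ∀ x ∈ weierstrassSet (d₁ * d₂), ∀ y ∈ weierstrassSet (d₁ * d₂),
        ∀ z ∈ weierstrassSet (d₁ * d₂),
          x ≠ y → x ≠ z → y ≠ z → ¬(x - y ∈ G ∧ x - z ∈ G)) := by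
  subst hG
  rw [perp_closure_eq_perpOfType hd₁.ne' hd₂.ne', closure_eq_isotropicOfType,
    closure_eq_perpOfType]
  refine ⟨isIsotropic_isotropicOfType, natCard_isotropicOfType hd₁.ne' hd₂.ne', rfl,
    nonempty_quotient_perpOfType_addEquiv hd₁.ne' hd₂.ne', ?_⟩
  rintro - x hx y hy z hz hxy hxz hyz ⟨hxyG, hxzG⟩
  exact hyz (eq_of_mem_weierstrassSet hx hy hz (snd_snd_eq_of_sub_mem_isotropicOfType hxyG)
    (snd_snd_eq_of_sub_mem_isotropicOfType hxzG) hxy hxz)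

/-- the subgroup `G = ⟨d₁·e₁', d₂·e₂'⟩` of `(ZMod (d₁d₂))⁴` is isotropic
of cardinality `d₁d₂`, has orthogonal complement `⟨e₁', d₂·f₁', e₂', d₁·f₂'⟩` with
`G^⊥/G ≅ (ZMod d₁)² × (ZMod d₂)²`, and (if `d₂` is even) every coset of `G` contains at
most two of the six Weierstrass 2-torsion elements. -/
theorem stmt_12 (d₁ d₂ : ℕ) (hd₁ : 0 < d₁) (hd₂ : 0 < d₂) (hdvd : d₁ ∣ d₂)
    (G : AddSubgroup (M (d₁ * d₂)))
    (hG : G = AddSubgroup.closure {d₁ • e₁' (d₁ * d₂), d₂ • e₂' (d₁ * d₂)}) :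
    IsIsotropic (d₁ * d₂) G ∧
    Nat.card G = d₁ * d₂ ∧
    perp (d₁ * d₂) G = AddSubgroup.closure
      {e₁' (d₁ * d₂), d₂ • f₁' (d₁ * d₂), e₂' (d₁ * d₂), d₁ • f₂' (d₁ * d₂)} ∧
    Nonempty
      ((perp (d₁ * d₂) G ⧸ G.addSubgroupOf (perp (d₁ * d₂) G)) ≃+
        (ZMod d₁ × ZMod d₁ × ZMod d₂ × ZMod d₂)) ∧
    (2 ∣ d₂ →
      ∀ x ∈ weierstrassSet (d₁ * d₂), ∀ y ∈ weierstrassSet (d₁ * d₂),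
        ∀ z ∈ weierstrassSet (d₁ * d₂),
          x ≠ y → x ≠ z → y ≠ z → ¬(x - y ∈ G ∧ x - z ∈ G)) :=
  stmt_12_general d₁ d₂ hd₁ hd₂ G hG
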